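/- Let d ≥ 2 be an integer, let β₀ > (d+1)/2 and β ≥ β₀ be real, let A > 0 and let t < 0. Then (c'_{d,β} π^{(d−1)/2} / ((2β)^{d/2} Γ((d+1)/2))) · ∫_{−∞}^{t} (√(t−s) + A)^{d−1} (1 − s/(2β))^{−β} ds < (2 (2β₀)^{β₀} / (√π (2β₀ − d − 1)^{(d+1)/2})) · (A+1)^{d−1} · (2β₀ − t)^{−β₀ + (d+1)/2}. -/

import Mathlib

open MeasureTheory

/-- The constant `c'_{d,β} = Γ(β)/(π^{d/2} Γ(β-d/2))`. -/
noncomputable def cPrime (d : ℕ) (β : ℝ) : ℝ :=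
  Real.Gamma β / (Real.pi ^ ((d : ℝ) / 2) * Real.Gamma (β - (d : ℝ) / 2))

/-!
Log-convexity of `Γ` gives `Γ(β) ≤ β^{d/2} Γ(β - d/2)`, which bounds `c'_{d,β}` by `(β/π)^{d/2}`.
Put `a = (d+1)/2`, `r = β₀ - a` and `M = 2β₀ - t`. Since `(1 + x/β)^β` increases with `β`
(Bernoulli), the integrand is at most `(A+1)^{d-1} (2β₀)^{β₀} max(t-s, 1)^{a-1} (2β₀-s)^{-β₀}`.
For `s ≤ t - 1` the inequality `1 - 1/x ≤ log x` gives `t - s ≤ (2β₀-s) log((2β₀-s)/M)`, and the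
substitution `2β₀ - s = M e^w` turns the resulting majorant into the Gamma integral
`M^{-r} Γ(a) / r^a`; the interval `(t-1, t]` contributes at most `M^{-β₀}`. As `M > 2r`, the
latter is absorbed thanks to `(√2 - 1) 2^a Γ(a) ≥ 1`.
-/

open Set Real

namespace Real

theorem Gamma_le_sqrt_mul_Gamma_sub_half {β : ℝ} (hβ : 1 / 2 < β) :
    Gamma β ≤ β ^ (1 / 2 : ℝ) * Gamma (β - 1 / 2) := by
  have hx : 0 < β - 1 / 2 := sub_pos.2 hβ
  have hΓ := Gamma_pos_of_pos hx
  calc Gamma β = Gamma (1 / 2 * (β - 1 / 2) + 1 / 2 * (β - 1 / 2 + 1)) := by congr 1; ring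
    _ ≤ Gamma (β - 1 / 2) ^ (1 / 2 : ℝ) * Gamma (β - 1 / 2 + 1) ^ (1 / 2 : ℝ) :=
      Gamma_mul_add_mul_le_rpow_Gamma_mul_rpow_Gamma hx (by linarith) (by norm_num)
        (by norm_num) (by norm_num)
    _ = (β - 1 / 2) ^ (1 / 2 : ℝ) * Gamma (β - 1 / 2) := by
      rw [Gamma_add_one hx.ne', mul_rpow hx.le hΓ.le, mul_left_comm, ← rpow_add hΓ]
      norm_num
    _ ≤ β ^ (1 / 2 : ℝ) * Gamma (β - 1 / 2) := by gcongr; linarith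

theorem Gamma_le_rpow_mul_Gamma_sub (d : ℕ) {β : ℝ} (hβ : ((d : ℝ) + 1) / 2 ≤ β) :
    Gamma β ≤ β ^ ((d : ℝ) / 2) * Gamma (β - d / 2) := by
  induction d generalizing β with
  | zero => simp
  | succ d ih =>
    push_cast at hβ ⊢
    have hd : (0 : ℝ) ≤ d := d.cast_nonneg
    have hΓ : 0 ≤ Gamma (β - 1 / 2 - d / 2) := (Gamma_pos_of_pos (by linarith)).le
    calc Gamma β ≤ β ^ (1 / 2 : ℝ) * Gamma (β - 1 / 2) :=
          Gamma_le_sqrt_mul_Gamma_sub_half (by linarith)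
      _ ≤ β ^ (1 / 2 : ℝ) * ((β - 1 / 2) ^ ((d : ℝ) / 2) * Gamma (β - 1 / 2 - d / 2)) :=
          mul_le_mul_of_nonneg_left (ih (by linarith)) (rpow_nonneg (by linarith) _)
      _ ≤ β ^ (1 / 2 : ℝ) * (β ^ ((d : ℝ) / 2) * Gamma (β - 1 / 2 - d / 2)) := by
          refine mul_le_mul_of_nonneg_left (mul_le_mul_of_nonneg_right ?_ hΓ)
            (rpow_nonneg (by linarith) _)
          exact rpow_le_rpow (by linarith) (by linarith) (by positivity)
      _ = β ^ (((d : ℝ) + 1) / 2) * Gamma (β - (d + 1) / 2) := by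
          rw [← mul_assoc, ← rpow_add (by linarith)]
          congr 2 <;> ring

theorem one_le_sqrt_two_sub_one_mul_two_rpow_mul_Gamma {d : ℕ} (hd : 2 ≤ d) :
    1 ≤ (√2 - 1) * 2 ^ (((d : ℝ) + 1) / 2) * Gamma (((d : ℝ) + 1) / 2) := by
  have h2 : (√2) ^ 2 = 2 := sq_sqrt zero_le_two
  have h2lt : √2 < 1.5 := by rw [sqrt_lt' (by norm_num)]; norm_num
  have h2gt : 1.4 < √2 := by rw [lt_sqrt (by norm_num)]; norm_num
  rcases hd.eq_or_lt with rfl | hd3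
  · have hπ : (√π) ^ 2 = π := sq_sqrt pi_pos.le
    have hπgt : 1.77 < √π := by rw [lt_sqrt (by norm_num)]; linarith [pi_gt_d2]
    rw [show (((2 : ℕ) : ℝ) + 1) / 2 = 1 / 2 + 1 by norm_num, Gamma_add_one (by norm_num),
      Gamma_one_half_eq, rpow_add two_pos, rpow_one, ← sqrt_eq_rpow]
    nlinarith
  · have ha : (2 : ℝ) ≤ ((d : ℝ) + 1) / 2 := by
      have : (3 : ℝ) ≤ d := by exact_mod_cast hd3
      linarith
    have hΓ : Gamma 2 ≤ Gamma (((d : ℝ) + 1) / 2) :=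
      Gamma_strictMonoOn_Ici.monotoneOn (mem_Ici.2 le_rfl) ha ha
    rw [Gamma_two] at hΓ
    have h4 : (4 : ℝ) ≤ 2 ^ (((d : ℝ) + 1) / 2) := by
      calc (4 : ℝ) = 2 ^ (2 : ℝ) := by norm_num
        _ ≤ _ := rpow_le_rpow_of_exponent_le one_le_two ha
    calc (1 : ℝ) ≤ (√2 - 1) * 4 * 1 := by linarith
      _ ≤ _ := mul_le_mul (mul_le_mul_of_nonneg_left h4 (by linarith)) hΓ zero_le_one
        (mul_nonneg (by linarith) (by positivity))

end Real

theorem cPrime_mul_div_le {d : ℕ} {β : ℝ} (hβ : ((d : ℝ) + 1) / 2 ≤ β) :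
    cPrime d β * π ^ (((d : ℝ) - 1) / 2) / (2 * β) ^ ((d : ℝ) / 2) ≤
      2 ^ (-((d : ℝ) / 2)) / √π := by
  have hd : (0 : ℝ) ≤ d := d.cast_nonneg
  have hβ0 : 0 < β := by linarith
  have hΓ : 0 < Gamma (β - d / 2) := Gamma_pos_of_pos (by linarith)
  have hπ : π ^ ((d : ℝ) / 2) = π ^ (((d : ℝ) - 1) / 2) * √π := by
    rw [sqrt_eq_rpow, ← rpow_add pi_pos]; ring_nf
  rw [cPrime, mul_rpow zero_le_two hβ0.le, rpow_neg zero_le_two, hπ,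
    div_le_iff₀ (by positivity)]
  calc Gamma β / (π ^ (((d : ℝ) - 1) / 2) * √π * Gamma (β - d / 2)) * π ^ (((d : ℝ) - 1) / 2)
      ≤ β ^ ((d : ℝ) / 2) * Gamma (β - d / 2) / (π ^ (((d : ℝ) - 1) / 2) * √π
          * Gamma (β - d / 2)) * π ^ (((d : ℝ) - 1) / 2) := by
        gcongr; exact Gamma_le_rpow_mul_Gamma_sub d hβ
    _ = _ := by generalize Gamma (β - d / 2) = G at hΓ; field_simp

theorem sqrt_add_pow_le (n : ℕ) (u : ℝ) {A : ℝ} (hA : 0 ≤ A) :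
    (√u + A) ^ n ≤ (A + 1) ^ n * max u 1 ^ ((n : ℝ) / 2) := by
  have hm : 1 ≤ √(max u 1) := one_le_sqrt.2 (le_max_right _ _)
  have hum : √u ≤ √(max u 1) := sqrt_le_sqrt (le_max_left _ _)
  calc (√u + A) ^ n ≤ ((A + 1) * √(max u 1)) ^ n := by gcongr; nlinarith
    _ = (A + 1) ^ n * max u 1 ^ ((n : ℝ) / 2) := by
      rw [mul_pow, sqrt_eq_rpow, ← rpow_natCast (max u 1 ^ (1 / 2 : ℝ)),
        ← rpow_mul (by positivity)]
      ring_nf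

theorem one_add_div_rpow_le_one_add_div_rpow {x p q : ℝ} (hx : 0 ≤ x) (hp : 0 < p)
    (hpq : p ≤ q) : (1 + x / p) ^ p ≤ (1 + x / q) ^ q := by
  have hq : 0 < q := hp.trans_le hpq
  have hbern : 1 + q / p * (x / q) ≤ (1 + x / q) ^ (q / p) :=
    one_add_mul_self_le_rpow_one_add (by linarith [div_nonneg hx hq.le]) ((one_le_div hp).2 hpq)
  rw [show q / p * (x / q) = x / p by field_simp] at hbern
  calc (1 + x / p) ^ p ≤ ((1 + x / q) ^ (q / p)) ^ p := rpow_le_rpow (by positivity) hbern hp.le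
    _ = (1 + x / q) ^ q := by rw [← rpow_mul (by positivity), div_mul_cancel₀ _ hp.ne']

theorem one_sub_div_rpow_neg_nonneg {s β : ℝ} (hs : s ≤ 0) (hβ : 0 < β) :
    0 ≤ (1 - s / (2 * β)) ^ (-β) :=
  rpow_nonneg (by linarith [div_nonpos_of_nonpos_of_nonneg hs (by linarith : 0 ≤ 2 * β)]) _

theorem one_sub_div_rpow_neg_le {s β₀ β : ℝ} (hs : s ≤ 0) (hβ₀ : 0 < β₀) (hβ : β₀ ≤ β) :
    (1 - s / (2 * β)) ^ (-β) ≤ (2 * β₀) ^ β₀ * (2 * β₀ - s) ^ (-β₀) := by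
  have hx : 0 ≤ -s / 2 := by linarith
  have hβ' : 0 < β := hβ₀.trans_le hβ
  calc (1 - s / (2 * β)) ^ (-β) = ((1 + -s / 2 / β) ^ β)⁻¹ := by
        rw [← rpow_neg (by positivity)]; ring_nf
    _ ≤ ((1 + -s / 2 / β₀) ^ β₀)⁻¹ :=
        inv_anti₀ (by positivity) (one_add_div_rpow_le_one_add_div_rpow hx hβ₀ hβ)
    _ = (2 * β₀) ^ β₀ * (2 * β₀ - s) ^ (-β₀) := by
        rw [show 1 + -s / 2 / β₀ = (2 * β₀ - s) / (2 * β₀) by field_simp; ring,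
          div_rpow (by linarith) (by positivity), rpow_neg (by linarith)]
        field_simp

noncomputable def logKernel (c M a r s : ℝ) : ℝ :=
  log ((c - s) / M) ^ (a - 1) * (c - s) ^ (-(r + 1))

theorem max_rpow_mul_rpow_le {c t s a r : ℝ} (hct : t < c) (ha : 1 ≤ a) (hra : 0 ≤ r + a)
    (hs : s ≤ t) :
    max (t - s) 1 ^ (a - 1) * (c - s) ^ (-(r + a)) ≤
      logKernel c (c - t) a r s + (Ioc (t - 1) t).indicator (fun _ ↦ (c - t) ^ (-(r + a))) s := by
  have hcs : 0 < c - s := by linarith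
  have hct' : 0 < c - t := by linarith
  have hlog : 0 ≤ log ((c - s) / (c - t)) :=
    log_nonneg ((one_le_div hct').2 (by linarith))
  rcases le_or_gt s (t - 1) with hs₁ | hs₁
  · rw [indicator_of_notMem (fun h ↦ by linarith [h.1]), add_zero, max_eq_left (by linarith),
      logKernel]
    have hfrac : (t - s) / (c - s) ≤ log ((c - s) / (c - t)) := by
      have := one_sub_inv_le_log_of_pos (div_pos hcs hct')
      rw [inv_div] at this
      calc (t - s) / (c - s) = 1 - (c - t) / (c - s) := by field_simp; ring
        _ ≤ _ := this
    calc (t - s) ^ (a - 1) * (c - s) ^ (-(r + a))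
        = ((t - s) / (c - s)) ^ (a - 1) * (c - s) ^ (-(r + 1)) := by
          rw [show -(r + a) = -(a - 1) + -(r + 1) by ring, rpow_add hcs, rpow_neg hcs.le,
            div_rpow (by linarith) hcs.le]
          ring
      _ ≤ log ((c - s) / (c - t)) ^ (a - 1) * (c - s) ^ (-(r + 1)) := by gcongr
  · rw [indicator_of_mem (show s ∈ Ioc (t - 1) t from ⟨hs₁, hs⟩), max_eq_right (by linarith),
      one_rpow, one_mul]
    have hK : 0 ≤ logKernel c (c - t) a r s :=
      mul_nonneg (rpow_nonneg hlog _) (rpow_nonneg hcs.le _)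
    have := rpow_le_rpow_of_nonpos hct' (show c - t ≤ c - s by linarith) (neg_nonpos.2 hra)
    linarith

theorem image_sub_mul_exp_Ioi (c : ℝ) {M : ℝ} (hM : 0 < M) :
    (fun w ↦ c - M * exp w) '' Ioi 0 = Iio (c - M) := by
  ext x
  simp only [mem_image, mem_Ioi, mem_Iio]
  constructor
  · rintro ⟨w, hw, rfl⟩
    nlinarith [one_lt_exp_iff.2 hw]
  · intro hx
    have hpos : 0 < (c - x) / M := div_pos (by linarith) hM
    refine ⟨log ((c - x) / M), log_pos ((one_lt_div hM).2 (by linarith)), ?_⟩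
    rw [exp_log hpos]
    field_simp
    ring

theorem integral_Iio_eq_integral_Ioi_sub_mul_exp (c : ℝ) {M : ℝ} (hM : 0 < M) (g : ℝ → ℝ) :
    ∫ x in Iio (c - M), g x = ∫ w in Ioi 0, M * exp w * g (c - M * exp w) := by
  rw [← image_sub_mul_exp_Ioi c hM, integral_image_eq_integral_abs_deriv_smul measurableSet_Ioi
    (fun w _ ↦ (((hasDerivAt_exp w).const_mul M).const_sub c).hasDerivWithinAt)
    (fun x _ y _ h ↦ exp_injective (mul_left_cancel₀ hM.ne' (by simpa using h))) g]
  refine setIntegral_congr_fun measurableSet_Ioi fun w _ ↦ ?_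
  rw [abs_neg, abs_of_pos (by positivity), smul_eq_mul]

theorem mul_exp_mul_logKernel (c : ℝ) {M : ℝ} (hM : 0 < M) (a r w : ℝ) :
    M * exp w * logKernel c M a r (c - M * exp w) = M ^ (-r) * (w ^ (a - 1) * exp (-(r * w))) := by
  have hMw : 0 < M * exp w := by positivity
  have hpow : M * exp w * (M * exp w) ^ (-(r + 1)) = M ^ (-r) * exp (-(r * w)) := by
    rw [mul_comm, ← rpow_add_one hMw.ne', mul_rpow hM.le (exp_pos w).le, ← exp_mul]
    ring_nf
  rw [logKernel, sub_sub_cancel, mul_div_cancel_left₀ _ hM.ne', log_exp, mul_left_comm, hpow]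
  ring

theorem integral_logKernel (c : ℝ) {M a r : ℝ} (hM : 0 < M) (ha : 0 < a) (hr : 0 < r) :
    ∫ s in Iio (c - M), logKernel c M a r s = M ^ (-r) * Gamma a / r ^ a := by
  rw [integral_Iio_eq_integral_Ioi_sub_mul_exp c hM,
    setIntegral_congr_fun measurableSet_Ioi fun w _ ↦ mul_exp_mul_logKernel c hM a r w,
    integral_const_mul, integral_rpow_mul_exp_neg_mul_Ioi ha hr, one_div, inv_rpow hr.le]
  ring

theorem integrableOn_logKernel (c : ℝ) {M a r : ℝ} (hM : 0 < M) (ha : 0 < a) (hr : 0 < r) :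
    IntegrableOn (logKernel c M a r) (Iio (c - M)) :=
  .of_integral_ne_zero <| by
    rw [integral_logKernel c hM ha hr]
    have := Gamma_pos_of_pos ha
    positivity

theorem setIntegral_Iic_le_of_le_max_rpow {f : ℝ → ℝ} {K c t a r : ℝ} (hct : t < c)
    (ha : 1 ≤ a) (hr : 0 < r) (hK : 0 ≤ K) (hf₀ : ∀ s ≤ t, 0 ≤ f s)
    (hf : ∀ s ≤ t, f s ≤ K * (max (t - s) 1 ^ (a - 1) * (c - s) ^ (-(r + a)))) :
    ∫ s in Iic t, f s ≤ K * ((c - t) ^ (-r) * Gamma a / r ^ a + (c - t) ^ (-(r + a))) := by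
  have hM : 0 < c - t := sub_pos.2 hct
  set bump := (Ioc (t - 1) t).indicator fun _ ↦ (c - t) ^ (-(r + a))
  have hker : IntegrableOn (logKernel c (c - t) a r) (Iic t) := by
    rw [integrableOn_Iic_iff_integrableOn_Iio]
    simpa using integrableOn_logKernel c hM (by linarith) hr
  have hbump : IntegrableOn bump (Iic t) :=
    ((integrable_indicator_iff measurableSet_Ioc).2 (integrableOn_const (by simp))).integrableOn
  calc ∫ s in Iic t, f s ≤ ∫ s in Iic t, K * (logKernel c (c - t) a r s + bump s) :=
        integral_mono_of_nonneg (ae_restrict_of_forall_mem measurableSet_Iic hf₀)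
          ((hker.add hbump).const_mul K) (ae_restrict_of_forall_mem measurableSet_Iic fun s hs ↦
            (hf s hs).trans (mul_le_mul_of_nonneg_left
              (max_rpow_mul_rpow_le hct ha (by linarith) hs) hK))
    _ = K * ((c - t) ^ (-r) * Gamma a / r ^ a + (c - t) ^ (-(r + a))) := by
        have hkerval := integral_logKernel c hM (a := a) (by linarith) hr
        rw [sub_sub_cancel] at hkerval
        rw [integral_const_mul, integral_add hker hbump, integral_Iic_eq_integral_Iio, hkerval,
          setIntegral_indicator measurableSet_Ioc, inter_eq_right.2 Ioc_subset_Iic_self,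
          setIntegral_const, volume_real_Ioc]
        simp

theorem two_rpow_neg_half_mul_add_lt {d : ℕ} (hd : 2 ≤ d) {r M : ℝ} (hr : 0 < r)
    (hrM : 2 * r < M) :
    2 ^ (-((d : ℝ) / 2)) *
        (M ^ (-r) / r ^ (((d : ℝ) + 1) / 2) +
          M ^ (-(r + ((d : ℝ) + 1) / 2)) / Gamma (((d : ℝ) + 1) / 2)) <
      2 * M ^ (-r) / (2 * r) ^ (((d : ℝ) + 1) / 2) := by
  set a := ((d : ℝ) + 1) / 2
  have ha : 0 < a := by positivity
  have hM : 0 < M := by linarith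
  have hG : 0 < Gamma a := Gamma_pos_of_pos ha
  have hq : 0 < (2 : ℝ) ^ a := by positivity
  have hy : 0 < r ^ a := by positivity
  have hsq : √2 * √2 = 2 := mul_self_sqrt zero_le_two
  have hhalf : (2 : ℝ) ^ (-((d : ℝ) / 2)) = √2 / 2 ^ a := by
    rw [eq_div_iff hq.ne', ← rpow_add two_pos, sqrt_eq_rpow]
    congr 1
    ring
  have hMa : M ^ (-a) * (2 ^ a * r ^ a) < 1 := by
    rw [← mul_rpow zero_le_two hr.le, ← lt_div_iff₀ (by positivity), one_div,
      ← rpow_neg (by positivity)]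
    exact rpow_lt_rpow_of_neg (by positivity) hrM (by linarith)
  have hsmall : M ^ (-a) * r ^ a / Gamma a < √2 - 1 := by
    have := one_le_sqrt_two_sub_one_mul_two_rpow_mul_Gamma hd
    rw [div_lt_iff₀ hG]
    nlinarith
  calc 2 ^ (-((d : ℝ) / 2)) * (M ^ (-r) / r ^ a + M ^ (-(r + a)) / Gamma a)
      = M ^ (-r) / (2 ^ a * r ^ a) * (√2 * (1 + M ^ (-a) * r ^ a / Gamma a)) := by
        rw [hhalf, neg_add, rpow_add hM]
        field_simp
    _ < M ^ (-r) / (2 ^ a * r ^ a) * 2 := by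
        gcongr
        nlinarith [sqrt_nonneg 2]
    _ = 2 * M ^ (-r) / (2 * r) ^ a := by
        rw [mul_rpow zero_le_two hr.le]
        ring

theorem setIntegral_sqrt_add_pow_mul_one_sub_div_rpow_le (n : ℕ) {β₀ β A t : ℝ}
    (hβ₀ : (n : ℝ) / 2 + 1 < β₀) (hβ : β₀ ≤ β) (hA : 0 ≤ A) (ht : t ≤ 0) :
    ∫ s in Iic t, (√(t - s) + A) ^ n * (1 - s / (2 * β)) ^ (-β) ≤
      (A + 1) ^ n * (2 * β₀) ^ β₀ *
        ((2 * β₀ - t) ^ (-(β₀ - ((n : ℝ) / 2 + 1))) * Gamma ((n : ℝ) / 2 + 1) /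
            (β₀ - ((n : ℝ) / 2 + 1)) ^ ((n : ℝ) / 2 + 1) + (2 * β₀ - t) ^ (-β₀)) := by
  have hβ₀' : 0 < β₀ := by linarith [show (0 : ℝ) ≤ n / 2 by positivity]
  have hβ' : 0 < β := hβ₀'.trans_le hβ
  have hr : 0 < β₀ - ((n : ℝ) / 2 + 1) := sub_pos.2 hβ₀
  have key := setIntegral_Iic_le_of_le_max_rpow (K := (A + 1) ^ n * (2 * β₀) ^ β₀)
    (c := 2 * β₀) (a := (n : ℝ) / 2 + 1)
    (f := fun s ↦ (√(t - s) + A) ^ n * (1 - s / (2 * β)) ^ (-β)) (by linarith)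
    (by linarith [show (0 : ℝ) ≤ n / 2 by positivity]) hr (by positivity)
    (fun s hs ↦ mul_nonneg (by positivity) (one_sub_div_rpow_neg_nonneg (by linarith) hβ'))
    fun s hs ↦ by
      calc (√(t - s) + A) ^ n * (1 - s / (2 * β)) ^ (-β)
          ≤ (A + 1) ^ n * max (t - s) 1 ^ ((n : ℝ) / 2) *
              ((2 * β₀) ^ β₀ * (2 * β₀ - s) ^ (-β₀)) :=
            mul_le_mul (sqrt_add_pow_le _ _ hA) (one_sub_div_rpow_neg_le (by linarith) hβ₀' hβ)
              (one_sub_div_rpow_neg_nonneg (by linarith) hβ') (by positivity)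
        _ = _ := by
            rw [show (n : ℝ) / 2 + 1 - 1 = n / 2 by ring,
              show β₀ - ((n : ℝ) / 2 + 1) + ((n : ℝ) / 2 + 1) = β₀ by ring]
            ring
  simpa only [sub_add_cancel] using key

/-- For `d ≥ 2`, `β₀ > (d+1)/2`, `β ≥ β₀`, `A > 0`, `t < 0`:
`(c'_{d,β} π^{(d-1)/2}/((2β)^{d/2} Γ((d+1)/2))) ∫_{-∞}^{t}(√(t-s)+A)^{d-1}(1-s/(2β))^{-β} ds
 < (2(2β₀)^{β₀}/(√π (2β₀-d-1)^{(d+1)/2})) (A+1)^{d-1} (2β₀-t)^{-β₀+(d+1)/2}`. -/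
theorem stmt_12 (d : ℕ) (hd : 2 ≤ d) (β₀ β A t : ℝ)
    (hβ₀ : ((d : ℝ) + 1) / 2 < β₀) (hβ : β₀ ≤ β) (hA : 0 < A) (ht : t < 0) :
    cPrime d β * Real.pi ^ (((d : ℝ) - 1) / 2) /
        ((2 * β) ^ ((d : ℝ) / 2) * Real.Gamma (((d : ℝ) + 1) / 2)) *
        ∫ s in Set.Iic t,
          (Real.sqrt (t - s) + A) ^ (d - 1) * (1 - s / (2 * β)) ^ (-β)
      < 2 * (2 * β₀) ^ β₀ /
          (Real.sqrt Real.pi * (2 * β₀ - (d : ℝ) - 1) ^ (((d : ℝ) + 1) / 2)) *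
          (A + 1) ^ (d - 1) * (2 * β₀ - t) ^ (-β₀ + ((d : ℝ) + 1) / 2) := by
  have hn : ((d - 1 : ℕ) : ℝ) / 2 + 1 = ((d : ℝ) + 1) / 2 := by
    rw [Nat.cast_sub (by omega)]; push_cast; ring
  set a := ((d : ℝ) + 1) / 2
  set r := β₀ - a with hr
  set K := (A + 1) ^ (d - 1) * (2 * β₀) ^ β₀
  have ha : 0 < a := by positivity
  have hG : 0 < Gamma a := Gamma_pos_of_pos ha
  have hK : 0 < K := mul_pos (by positivity) (rpow_pos_of_pos (by linarith) _)
  have hI := setIntegral_sqrt_add_pow_mul_one_sub_div_rpow_le (d - 1) (hn ▸ hβ₀) hβ hA.le ht.le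
  rw [hn] at hI
  have hkey := two_rpow_neg_half_mul_add_lt hd (sub_pos.2 hβ₀) (M := 2 * β₀ - t) (by linarith)
  rw [show r + a = β₀ by rw [hr]; ring] at hkey
  calc cPrime d β * π ^ (((d : ℝ) - 1) / 2) / ((2 * β) ^ ((d : ℝ) / 2) * Gamma a) *
        ∫ s in Iic t, (√(t - s) + A) ^ (d - 1) * (1 - s / (2 * β)) ^ (-β)
      ≤ 2 ^ (-((d : ℝ) / 2)) / √π / Gamma a *
          (K * ((2 * β₀ - t) ^ (-r) * Gamma a / r ^ a + (2 * β₀ - t) ^ (-β₀))) := by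
        rw [← div_div]
        exact mul_le_mul (div_le_div_of_nonneg_right (cPrime_mul_div_le (hβ₀.le.trans hβ)) hG.le)
          hI (setIntegral_nonneg measurableSet_Iic fun s hs ↦
            mul_nonneg (by positivity) (one_sub_div_rpow_neg_nonneg (by linarith [mem_Iic.1 hs])
              (by linarith))) (by positivity)
    _ = K / √π * (2 ^ (-((d : ℝ) / 2)) *
          ((2 * β₀ - t) ^ (-r) / r ^ a + (2 * β₀ - t) ^ (-β₀) / Gamma a)) := by
        field_simp
    _ < K / √π * (2 * (2 * β₀ - t) ^ (-r) / (2 * r) ^ a) :=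
        mul_lt_mul_of_pos_left hkey (div_pos hK (sqrt_pos.2 pi_pos))
    _ = _ := by
        rw [show 2 * β₀ - (d : ℝ) - 1 = 2 * r by ring, show -β₀ + a = -r by ring]
        ring
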